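/- arXiv:2212.04187 — 4 statements merged into one kernel-verified Lean document; each statement's English description precedes it below -/
import Mathlib

section
/- Let x* ∈ ℝⁿ with support J = supp(x*). Suppose there exists a vector c ∈ ℝⁿ such that ⟨P e_i, c⟩ = ‖P e_i‖₂ · sgn(x*_i) for every i ∈ J and |⟨P e_i, c⟩| < ‖P e_i‖₂ for every i ∉ J. Then x* is a minimizer of the weighted ℓ1 norm ‖W x‖₁ = Σ_{i=1}^n w_i |x_i| over all x ∈ ℝⁿ satisfying A x = A x*. -/
/-!
Dual certificate argument: `d := P c` satisfies `|d i| ≤ w i` for all `i`, with equality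
`d i = w i * sgn (x*_i)` on the support, so `∑ x*_i d_i = ‖W x*‖₁` while `∑ x_i d_i ≤ ‖W x‖₁` for
every `x`. Since `P` is self-adjoint, `∑ x_i d_i = ⟪P x, c⟫`, and `P x = P x*` whenever
`A x = A x*` because `x - x*` lies in `ker A`.
-/

open scoped RealInnerProductSpace Classical

/-- The `i`-th standard basis vector of `ℝⁿ`. -/
noncomputable def stdBasis (n : ℕ) (i : Fin n) : EuclideanSpace ℝ (Fin n) :=
  EuclideanSpace.single i 1

/-- `P`: the orthogonal projection of `ℝⁿ` onto the orthogonal complement of `ker A`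
(this equals `A†A` for the Moore–Penrose pseudoinverse `A†`). -/
noncomputable def proj {m n : ℕ} (A : EuclideanSpace ℝ (Fin n) →ₗ[ℝ] EuclideanSpace ℝ (Fin m))
    (x : EuclideanSpace ℝ (Fin n)) : EuclideanSpace ℝ (Fin n) :=
  (Submodule.orthogonalProjection (LinearMap.ker A)ᗮ x : EuclideanSpace ℝ (Fin n))

/-- The weights `w i = ‖P e_i‖₂`. -/
noncomputable def wgt {m n : ℕ} (A : EuclideanSpace ℝ (Fin n) →ₗ[ℝ] EuclideanSpace ℝ (Fin m))
    (i : Fin n) : ℝ :=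
  ‖proj A (stdBasis n i)‖

/-- The weighted ℓ¹ norm `‖W x‖₁ = ∑ i, w i * |x i|`. -/
noncomputable def wl1 {m n : ℕ} (A : EuclideanSpace ℝ (Fin n) →ₗ[ℝ] EuclideanSpace ℝ (Fin m))
    (x : EuclideanSpace ℝ (Fin n)) : ℝ :=
  ∑ i, wgt A i * |x i|

namespace Real

theorem abs_sign_le_one (r : ℝ) : |sign r| ≤ 1 := by
  rcases sign_apply_eq r with h | h | h <;> simp [h]

theorem mul_sign_self (r : ℝ) : r * sign r = |r| := by
  rcases lt_trichotomy r 0 with h | rfl | h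
  · rw [sign_of_neg h, abs_of_neg h, mul_neg_one]
  · simp
  · rw [sign_of_pos h, abs_of_pos h, mul_one]

end Real

section WeightedL1

variable {ι : Type*} [Fintype ι] {w d : ι → ℝ}

theorem sum_mul_le_sum_mul_abs_of_abs_le (h : ∀ i, |d i| ≤ w i) (x : ι → ℝ) :
    ∑ i, x i * d i ≤ ∑ i, w i * |x i| :=
  Finset.sum_le_sum fun i _ => calc
    x i * d i ≤ |x i| * |d i| := abs_mul (x i) (d i) ▸ le_abs_self _
    _ ≤ |x i| * w i := mul_le_mul_of_nonneg_left (h i) (abs_nonneg _)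
    _ = w i * |x i| := mul_comm _ _

theorem sum_mul_eq_sum_mul_abs_of_eq_mul_sign {x : ι → ℝ}
    (h : ∀ i, x i ≠ 0 → d i = w i * Real.sign (x i)) :
    ∑ i, x i * d i = ∑ i, w i * |x i| := by
  refine Finset.sum_congr rfl fun i _ => ?_
  by_cases hx : x i = 0
  · simp [hx]
  · rw [h i hx, ← Real.mul_sign_self, mul_left_comm]

end WeightedL1

section Projection

variable {m n : ℕ} (A : EuclideanSpace ℝ (Fin n) →ₗ[ℝ] EuclideanSpace ℝ (Fin m))

theorem proj_eq_starProjection (x : EuclideanSpace ℝ (Fin n)) :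
    proj A x = (LinearMap.ker A)ᗮ.starProjection x :=
  rfl

theorem proj_eq_of_map_eq {x y : EuclideanSpace ℝ (Fin n)} (h : A x = A y) :
    proj A x = proj A y := by
  have hker : x - y ∈ LinearMap.ker A := by
    rw [LinearMap.mem_ker, map_sub, h, sub_self]
  rw [← sub_eq_zero, proj_eq_starProjection, proj_eq_starProjection, ← map_sub]
  exact Submodule.starProjection_orthogonal_apply_eq_zero hker

theorem inner_proj_left (x v : EuclideanSpace ℝ (Fin n)) :
    ⟪proj A x, v⟫ = ⟪x, proj A v⟫ :=
  Submodule.inner_starProjection_left_eq_right _ x v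

theorem inner_proj_stdBasis_left (i : Fin n) (v : EuclideanSpace ℝ (Fin n)) :
    ⟪proj A (stdBasis n i), v⟫ = proj A v i := by
  rw [inner_proj_left, stdBasis, EuclideanSpace.inner_single_left, map_one, one_mul]

theorem inner_proj_eq_sum (x v : EuclideanSpace ℝ (Fin n)) :
    ⟪proj A x, v⟫ = ∑ i, x i * proj A v i := by
  rw [inner_proj_left, PiLp.inner_apply]
  simp only [RCLike.inner_apply, conj_trivial, mul_comm]

end Projection

theorem stmt0_general {m n : ℕ}
    (A : EuclideanSpace ℝ (Fin n) →ₗ[ℝ] EuclideanSpace ℝ (Fin m))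
    (xstar c : EuclideanSpace ℝ (Fin n))
    (hc1 : ∀ i, xstar i ≠ 0 →
      ⟪proj A (stdBasis n i), c⟫ = ‖proj A (stdBasis n i)‖ * Real.sign (xstar i))
    (hc2 : ∀ i, xstar i = 0 →
      |⟪proj A (stdBasis n i), c⟫| < ‖proj A (stdBasis n i)‖)
 :
    ∀ x : EuclideanSpace ℝ (Fin n), A x = A xstar → wl1 A xstar ≤ wl1 A x := by
  intro x hx
  have hd : ∀ i, proj A c i = ⟪proj A (stdBasis n i), c⟫ := fun i =>
    (inner_proj_stdBasis_left A i c).symm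
  have hd_sign : ∀ i, xstar i ≠ 0 → proj A c i = wgt A i * Real.sign (xstar i) := fun i h =>
    (hd i).trans (hc1 i h)
  have hd_abs : ∀ i, |proj A c i| ≤ wgt A i := by
    intro i
    rw [hd i]
    by_cases h : xstar i = 0
    · exact (hc2 i h).le
    · rw [hc1 i h, abs_mul, abs_norm]
      exact mul_le_of_le_one_right (norm_nonneg _) (Real.abs_sign_le_one _)
  calc wl1 A xstar = ∑ i, xstar i * proj A c i :=
        (sum_mul_eq_sum_mul_abs_of_eq_mul_sign hd_sign).symm
    _ = ⟪proj A xstar, c⟫ := (inner_proj_eq_sum A xstar c).symm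
    _ = ⟪proj A x, c⟫ := by rw [proj_eq_of_map_eq A hx]
    _ = ∑ i, x i * proj A c i := inner_proj_eq_sum A x c
    _ ≤ wl1 A x := sum_mul_le_sum_mul_abs_of_abs_le hd_abs x

theorem stmt0 {m n : ℕ}
    (A : EuclideanSpace ℝ (Fin n) →ₗ[ℝ] EuclideanSpace ℝ (Fin m))
    (hA : ∀ i, stdBasis n i ∉ LinearMap.ker A)
    (xstar c : EuclideanSpace ℝ (Fin n))
    (hc1 : ∀ i, xstar i ≠ 0 →
      ⟪proj A (stdBasis n i), c⟫ = ‖proj A (stdBasis n i)‖ * Real.sign (xstar i))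
    (hc2 : ∀ i, xstar i = 0 →
      |⟪proj A (stdBasis n i), c⟫| < ‖proj A (stdBasis n i)‖)
 :
    ∀ x : EuclideanSpace ℝ (Fin n), A x = A xstar → wl1 A xstar ≤ wl1 A x :=
  stmt0_general A xstar c hc1 hc2
end

section
/- Let x* ∈ ℝⁿ with support J = supp(x*). Suppose there exists a vector c ∈ ℝⁿ such that ⟨P e_i, c⟩ = ‖P e_i‖₂ · sgn(x*_i) for every i ∈ J and |⟨P e_i, c⟩| < ‖P e_i‖₂ for every i ∉ J. Then x* is the UNIQUE minimizer of the weighted ℓ1 norm ‖W x‖₁ = Σ_{i=1}^n w_i |x_i| subject to A x = A x* if and only if A is injective on the support of x*, i.e., the only q ∈ ℝⁿ with supp(q) ⊆ supp(x*) and A q = 0 is q = 0. -/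
open scoped RealInnerProductSpace Classical

/-!
With `d = P c ∈ (ker A)ᗮ` we have `d i = ⟪P e_i, c⟫`, so the hypotheses say `|d i| ≤ w i`, with
`d i * x⋆ i = w i * |x⋆ i|` on `supp x⋆` and `|d i| < w i` off it, while `x ↦ ∑ i, d i * x i` is
constant on `{x | A x = A x⋆}`. Hence `‖W x‖₁ ≥ ∑ d x = ∑ d x⋆ = ‖W x⋆‖₁` for feasible `x`,
with equality only if `supp x ⊆ supp x⋆`: two minimizers differ by a kernel vector supported in
`supp x⋆`.
Conversely, for `q ∈ ker A` supported in `supp x⋆` and small `t > 0`, `x⋆ + t q` has the signs of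
`x⋆` on `supp x⋆`, so `‖W (x⋆ + t q)‖₁ = ‖W x⋆‖₁ + t ∑ d q = ‖W x⋆‖₁` and uniqueness forces `q = 0`.
-/

open Filter Topology

namespace Real

lemma sign_mul_self_eq_abs (a : ℝ) : sign a * a = |a| := by
  rcases lt_trichotomy a 0 with h | rfl | h
  · rw [sign_of_neg h, abs_of_neg h]; ring
  · simp
  · rw [sign_of_pos h, abs_of_pos h, one_mul]

lemma abs_sign_of_ne_zero {a : ℝ} (ha : a ≠ 0) : |sign a| = 1 := by
  rcases sign_apply_eq_of_ne_zero a ha with h | h <;> simp [h]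

lemma eventually_abs_add_mul_eq {a : ℝ} (ha : a ≠ 0) (b : ℝ) :
    ∀ᶠ t in 𝓝 0, |a + t * b| = |a| + t * (sign a * b) := by
  have hlim : Tendsto (fun t => sign a * (a + t * b)) (𝓝 0) (𝓝 |a|) :=
    (show Continuous fun t => sign a * (a + t * b) by fun_prop).tendsto' 0 _
      (by simp [sign_mul_self_eq_abs])
  filter_upwards [hlim.eventually (lt_mem_nhds (abs_pos.2 ha))] with t ht
  calc |a + t * b| = |sign a * (a + t * b)| := by rw [abs_mul, abs_sign_of_ne_zero ha, one_mul]
    _ = sign a * (a + t * b) := abs_of_pos ht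
    _ = |a| + t * (sign a * b) := by rw [← sign_mul_self_eq_abs]; ring

end Real

section DualCertificate

lemma mul_le_mul_abs_of_abs_le {d w : ℝ} (h : |d| ≤ w) (x : ℝ) : d * x ≤ w * |x| := calc
  d * x ≤ |d| * |x| := abs_mul d x ▸ le_abs_self _
  _ ≤ w * |x| := mul_le_mul_of_nonneg_right h (abs_nonneg x)

variable {ι : Type*} {w d x₀ : ι → ℝ}

lemma abs_le_of_certificate (hw : ∀ i, 0 ≤ w i)
    (hon : ∀ i, x₀ i ≠ 0 → d i = w i * Real.sign (x₀ i))
    (hoff : ∀ i, x₀ i = 0 → |d i| < w i) (i : ι) : |d i| ≤ w i := by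
  by_cases h : x₀ i = 0
  · exact (hoff i h).le
  · rw [hon i h, abs_mul, Real.abs_sign_of_ne_zero h, mul_one, abs_of_nonneg (hw i)]

variable [Fintype ι]

lemma sum_mul_eq_sum_mul_abs_of_certificate
    (hon : ∀ i, x₀ i ≠ 0 → d i = w i * Real.sign (x₀ i)) :
    ∑ i, d i * x₀ i = ∑ i, w i * |x₀ i| := by
  refine Finset.sum_congr rfl fun i _ => ?_
  by_cases h : x₀ i = 0
  · simp [h]
  · rw [hon i h, mul_assoc, Real.sign_mul_self_eq_abs]

lemma sum_mul_le_sum_mul_abs (hdw : ∀ i, |d i| ≤ w i) (x : ι → ℝ) :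
    ∑ i, d i * x i ≤ ∑ i, w i * |x i| :=
  Finset.sum_le_sum fun i _ => mul_le_mul_abs_of_abs_le (hdw i) (x i)

lemma eq_zero_of_sum_mul_eq_sum_mul_abs (hdw : ∀ i, |d i| ≤ w i) {x : ι → ℝ}
    (h : ∑ i, d i * x i = ∑ i, w i * |x i|) {i : ι} (hi : |d i| < w i) : x i = 0 := by
  have hi_eq : d i * x i = w i * |x i| :=
    (Finset.sum_eq_sum_iff_of_le fun j _ => mul_le_mul_abs_of_abs_le (hdw j) (x j)).1 h i
      (Finset.mem_univ i)
  by_contra hx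
  have : |d i| * |x i| < w i * |x i| := mul_lt_mul_of_pos_right hi (abs_pos.2 hx)
  linarith [abs_mul (d i) (x i) ▸ le_abs_self (d i * x i)]

lemma exists_pos_sum_mul_abs_add_mul_eq
    (hon : ∀ i, x₀ i ≠ 0 → d i = w i * Real.sign (x₀ i)) {q : ι → ℝ}
    (hq : ∀ i, q i ≠ 0 → x₀ i ≠ 0) :
    ∃ t > (0 : ℝ), ∑ i, w i * |x₀ i + t * q i| = ∑ i, w i * |x₀ i| + t * ∑ i, d i * q i := by
  have hterm : ∀ i, ∀ᶠ t in 𝓝 (0 : ℝ),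
      w i * |x₀ i + t * q i| = w i * |x₀ i| + t * (d i * q i) := fun i => by
    by_cases hqi : q i = 0
    · simp [hqi]
    · have hxi := hq i hqi
      filter_upwards [Real.eventually_abs_add_mul_eq hxi (q i)] with t ht
      rw [ht, hon i hxi]; ring
  obtain ⟨t, ht, htpos⟩ :=
    ((eventually_all.2 hterm).filter_mono nhdsWithin_le_nhds |>.and self_mem_nhdsWithin).exists
      (f := 𝓝[>] (0 : ℝ))
  exact ⟨t, htpos, by rw [Finset.sum_congr rfl fun i _ => ht i, Finset.sum_add_distrib,
    Finset.mul_sum]⟩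

end DualCertificate

section Feasible

variable {ι : Type*} [Fintype ι] {F : Type*} [AddCommGroup F] [Module ℝ F]
  {A : EuclideanSpace ℝ ι →ₗ[ℝ] F} {w : ι → ℝ} {d x₀ : EuclideanSpace ℝ ι}

lemma sum_mul_eq_zero_of_mem_orthogonal {K : Submodule ℝ (EuclideanSpace ℝ ι)} (hd : d ∈ Kᗮ)
    {q : EuclideanSpace ℝ ι} (hq : q ∈ K) : ∑ i, d i * q i = 0 := by
  simpa [PiLp.inner_apply, mul_comm] using Submodule.inner_right_of_mem_orthogonal hq hd

lemma sum_mul_eq_of_map_eq (hd : d ∈ (LinearMap.ker A)ᗮ) {x : EuclideanSpace ℝ ι}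
    (hx : A x = A x₀) : ∑ i, d i * x i = ∑ i, d i * x₀ i := by
  have hker : x - x₀ ∈ LinearMap.ker A := by rw [LinearMap.mem_ker, map_sub, hx, sub_self]
  simpa [mul_sub, Finset.sum_sub_distrib, sub_eq_zero] using
    sum_mul_eq_zero_of_mem_orthogonal hd hker

variable (hd : d ∈ (LinearMap.ker A)ᗮ) (hon : ∀ i, x₀ i ≠ 0 → d i = w i * Real.sign (x₀ i))
include hd hon

lemma sum_mul_abs_le_of_certificate (hw : ∀ i, 0 ≤ w i) (hoff : ∀ i, x₀ i = 0 → |d i| < w i)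
    {x : EuclideanSpace ℝ ι} (hx : A x = A x₀) : ∑ i, w i * |x₀ i| ≤ ∑ i, w i * |x i| := calc
  ∑ i, w i * |x₀ i| = ∑ i, d i * x₀ i := (sum_mul_eq_sum_mul_abs_of_certificate hon).symm
  _ = ∑ i, d i * x i := (sum_mul_eq_of_map_eq hd hx).symm
  _ ≤ ∑ i, w i * |x i| := sum_mul_le_sum_mul_abs (abs_le_of_certificate hw hon hoff) x

lemma ne_zero_of_certificate (hw : ∀ i, 0 ≤ w i) (hoff : ∀ i, x₀ i = 0 → |d i| < w i)
    {y : EuclideanSpace ℝ ι} (hy : A y = A x₀) (hmin : ∑ i, w i * |y i| ≤ ∑ i, w i * |x₀ i|)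
    {i : ι} (hyi : y i ≠ 0) : x₀ i ≠ 0 := by
  have hdw := abs_le_of_certificate hw hon hoff
  have heq : ∑ i, d i * y i = ∑ i, w i * |y i| := by
    refine le_antisymm (sum_mul_le_sum_mul_abs hdw y) ?_
    rwa [sum_mul_eq_of_map_eq hd hy, sum_mul_eq_sum_mul_abs_of_certificate hon]
  exact fun hxi => hyi (eq_zero_of_sum_mul_eq_sum_mul_abs hdw heq (hoff i hxi))

lemma exists_pos_sum_mul_abs_add_smul_eq {q : EuclideanSpace ℝ ι} (hqA : A q = 0)
    (hq : ∀ i, q i ≠ 0 → x₀ i ≠ 0) :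
    ∃ t > (0 : ℝ), ∑ i, w i * |(x₀ + t • q) i| = ∑ i, w i * |x₀ i| := by
  obtain ⟨t, ht, heq⟩ := exists_pos_sum_mul_abs_add_mul_eq hon hq
  refine ⟨t, ht, ?_⟩
  simpa [sum_mul_eq_zero_of_mem_orthogonal hd hqA] using heq

theorem unique_min_iff_injOn_support_of_certificate (hw : ∀ i, 0 ≤ w i)
    (hoff : ∀ i, x₀ i = 0 → |d i| < w i) :
    ((∀ x, A x = A x₀ → ∑ i, w i * |x₀ i| ≤ ∑ i, w i * |x i|) ∧
      ∀ y, A y = A x₀ → (∀ x, A x = A x₀ → ∑ i, w i * |y i| ≤ ∑ i, w i * |x i|) → y = x₀) ↔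
    ∀ q : EuclideanSpace ℝ ι, (∀ i, q i ≠ 0 → x₀ i ≠ 0) → A q = 0 → q = 0 := by
  have hmin := fun x => sum_mul_abs_le_of_certificate (x := x) hd hon hw hoff
  constructor
  · rintro ⟨-, huniq⟩ q hq hqA
    obtain ⟨t, ht, heq⟩ := exists_pos_sum_mul_abs_add_smul_eq hd hon hqA hq
    have hfeas : A (x₀ + t • q) = A x₀ := by simp [hqA]
    have hy := huniq _ hfeas fun x hx => heq ▸ hmin x hx
    simpa [ht.ne'] using hy
  · refine fun hinj => ⟨hmin, fun y hy hymin => sub_eq_zero.1 (hinj _ ?_ ?_)⟩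
    · intro i hi hxi
      refine ne_zero_of_certificate hd hon hw hoff hy (hymin x₀ rfl) ?_ hxi
      simpa [hxi] using hi
    · simp [hy]

end Feasible

lemma inner_proj_stdBasis {m n : ℕ} (A : EuclideanSpace ℝ (Fin n) →ₗ[ℝ] EuclideanSpace ℝ (Fin m))
    (c : EuclideanSpace ℝ (Fin n)) (i : Fin n) : ⟪proj A (stdBasis n i), c⟫ = proj A c i := by
  rw [proj, stdBasis, ← Submodule.starProjection_apply,
    Submodule.inner_starProjection_left_eq_right, EuclideanSpace.inner_single_left]
  simp [proj]

theorem stmt5_general {m n : ℕ}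
    (A : EuclideanSpace ℝ (Fin n) →ₗ[ℝ] EuclideanSpace ℝ (Fin m))
    (xstar c : EuclideanSpace ℝ (Fin n))
    (hc1 : ∀ i, xstar i ≠ 0 →
      ⟪proj A (stdBasis n i), c⟫ = ‖proj A (stdBasis n i)‖ * Real.sign (xstar i))
    (hc2 : ∀ i, xstar i = 0 →
      |⟪proj A (stdBasis n i), c⟫| < ‖proj A (stdBasis n i)‖)
 :
    ((∀ x : EuclideanSpace ℝ (Fin n), A x = A xstar → wl1 A xstar ≤ wl1 A x) ∧
      ∀ y : EuclideanSpace ℝ (Fin n), A y = A xstar →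
        (∀ x : EuclideanSpace ℝ (Fin n), A x = A xstar → wl1 A y ≤ wl1 A x) → y = xstar) ↔
    (∀ q : EuclideanSpace ℝ (Fin n), (∀ i, q i ≠ 0 → xstar i ≠ 0) → A q = 0 → q = 0) := by
  simp only [inner_proj_stdBasis] at hc1 hc2
  exact unique_min_iff_injOn_support_of_certificate (w := wgt A)
    (Submodule.coe_mem _) hc1 (fun _ => norm_nonneg _) hc2

theorem stmt5 {m n : ℕ}
    (A : EuclideanSpace ℝ (Fin n) →ₗ[ℝ] EuclideanSpace ℝ (Fin m))
    (hA : ∀ i, stdBasis n i ∉ LinearMap.ker A)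
    (xstar c : EuclideanSpace ℝ (Fin n))
    (hc1 : ∀ i, xstar i ≠ 0 →
      ⟪proj A (stdBasis n i), c⟫ = ‖proj A (stdBasis n i)‖ * Real.sign (xstar i))
    (hc2 : ∀ i, xstar i = 0 →
      |⟪proj A (stdBasis n i), c⟫| < ‖proj A (stdBasis n i)‖)
 :
    ((∀ x : EuclideanSpace ℝ (Fin n), A x = A xstar → wl1 A xstar ≤ wl1 A x) ∧
      ∀ y : EuclideanSpace ℝ (Fin n), A y = A xstar →
        (∀ x : EuclideanSpace ℝ (Fin n), A x = A xstar → wl1 A y ≤ wl1 A x) → y = xstar) ↔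
    (∀ q : EuclideanSpace ℝ (Fin n), (∀ i, q i ≠ 0 → xstar i ≠ 0) → A q = 0 → q = 0) :=
  stmt5_general A xstar c hc1 hc2
end

section
/- Assume the non-parallel condition (NP): A e_i ≠ η A e_j for all indices i ≠ j and all η ∈ ℝ. Let x* ∈ ℝⁿ with support J = supp(x*), and suppose there is j̃ ∈ J such that e_j lies in the orthogonal complement of ker(A) for every j ∈ J \ {j̃}. Then there exist real numbers a_j, j ∈ J, such that the vector v = Σ_{j∈J} a_j W⁻¹ P e_j satisfies v_i = sgn(x*_i) for all i ∈ J and v_i ∈ (−1, 1) for all i ∉ J; moreover, for every α > 0 with sgn(x*_j − α a_j) = sgn(x*_j) for all j ∈ J, the vector y*_α = Σ_{j∈J} (x*_j − α a_j) e_j minimizes T_α(x) = ½ ‖P x − P x*‖₂² + α Σ_{i=1}^n w_i |x_i|. -/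
open scoped RealInnerProductSpace Classical

/-!
Take `a_j = sgn(x*_j) / w_j`. The Gram entry `⟪P e_i, P e_j⟫ = (P e_j)_i` vanishes for `i ≠ j`
as soon as `e_i` or `e_j` lies in `(ker A)ᗮ`, so `v = W⁻¹ P (∑ a_j e_j)` equals `sgn x*` on `J`,
while off `J` only the `j̃`-term survives and `|v_i| < 1` is the Cauchy–Schwarz inequality, strict
by (NP). For `y = y*_α` one gets `P y - P x* = -α W v`, and the sign condition makes `W v` a
subgradient of the weighted ℓ¹ norm at `y`: this first-order condition for the convex functional
`T_α` says that `y` minimizes it.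
-/

section StarProjection

variable {E : Type*} [NormedAddCommGroup E] [InnerProductSpace ℝ E]
  (K : Submodule ℝ E) [K.HasOrthogonalProjection]

theorem Submodule.half_sq_norm_starProjection_sub_add_inner_le (b x y : E) :
    1 / 2 * ‖K.starProjection y - K.starProjection b‖ ^ 2
        + ⟪K.starProjection y - K.starProjection b, x - y⟫
      ≤ 1 / 2 * ‖K.starProjection x - K.starProjection b‖ ^ 2 := by
  set g := K.starProjection y - K.starProjection b
  set u := K.starProjection x - K.starProjection b
  have hg : K.starProjection g = g :=
    K.starProjection_eq_self_iff.2 <|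
      K.sub_mem (K.starProjection_apply_mem y) (K.starProjection_apply_mem b)
  have hinner : ⟪g, x - y⟫ = ⟪g, u⟫ - ‖g‖ ^ 2 := by
    rw [← hg, K.inner_starProjection_left_eq_right, hg, map_sub, ← real_inner_self_eq_norm_sq,
      ← inner_sub_right]
    simp only [u, g, sub_sub_sub_cancel_right]
  have := norm_sub_sq_real u g
  rw [real_inner_comm] at this
  nlinarith [sq_nonneg ‖u - g‖]

end StarProjection

theorem abs_add_mul_sub_le {v x y : ℝ} (hv : |v| ≤ 1) (hvy : v * y = |y|) :
    |y| + v * (x - y) ≤ |x| := by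
  have : v * x ≤ |x| :=
    calc v * x ≤ |v| * |x| := abs_mul v x ▸ le_abs_self _
      _ ≤ |x| := mul_le_of_le_one_left (abs_nonneg x) hv
  linarith

theorem Real.abs_sign_le_one_s10 (r : ℝ) : |Real.sign r| ≤ 1 := by
  rcases Real.sign_apply_eq r with h | h | h <;> simp [h]

theorem Real.sign_mul_self (r : ℝ) : Real.sign r * r = |r| := by
  rcases lt_trichotomy r 0 with h | rfl | h
  · rw [Real.sign_of_neg h, abs_of_neg h]; ring
  · simp
  · rw [Real.sign_of_pos h, abs_of_pos h, one_mul]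

section EuclideanSpace

variable {ι : Type*} [Fintype ι]

theorem Submodule.half_sq_norm_starProjection_sub_add_weighted_l1_le
    (K : Submodule ℝ (EuclideanSpace ℝ ι)) [K.HasOrthogonalProjection]
    {w v : ι → ℝ} {α : ℝ} {b y : EuclideanSpace ℝ ι}
    (hw : ∀ i, 0 ≤ w i) (hα : 0 ≤ α) (hv : ∀ i, |v i| ≤ 1) (hvy : ∀ i, v i * y i = |y i|)
    (hgrad : ∀ i, (K.starProjection y - K.starProjection b) i = -(α * (w i * v i)))
    (x : EuclideanSpace ℝ ι) :
    1 / 2 * ‖K.starProjection y - K.starProjection b‖ ^ 2 + α * ∑ i, w i * |y i| ≤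
      1 / 2 * ‖K.starProjection x - K.starProjection b‖ ^ 2 + α * ∑ i, w i * |x i| := by
  set g := K.starProjection y - K.starProjection b
  have hinner : ⟪g, x - y⟫ = ∑ i, g i * (x i - y i) := by
    simp [PiLp.inner_apply, mul_comm]
  have hpt : ∀ i, α * (w i * |y i|) ≤ α * (w i * |x i|) + g i * (x i - y i) := fun i =>
    calc α * (w i * |y i|)
        ≤ α * (w i * |y i|) + α * w i * (|x i| - (|y i| + v i * (x i - y i))) :=
          le_add_of_nonneg_right <| mul_nonneg (mul_nonneg hα (hw i)) <|
            sub_nonneg.2 (abs_add_mul_sub_le (hv i) (hvy i))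
      _ = α * (w i * |x i|) + g i * (x i - y i) := by rw [hgrad i]; ring
  have hsum := Finset.sum_le_sum fun i (_ : i ∈ Finset.univ) => hpt i
  rw [Finset.sum_add_distrib, ← Finset.mul_sum, ← Finset.mul_sum, ← hinner] at hsum
  linarith [K.half_sq_norm_starProjection_sub_add_inner_le b x y]

end EuclideanSpace

theorem EuclideanSpace.sum_smul_single_apply {ι : Type*} [DecidableEq ι] (s : Finset ι)
    (c : ι → ℝ) (i : ι) :
    (∑ j ∈ s, c j • EuclideanSpace.single j (1 : ℝ)) i = if i ∈ s then c i else 0 := by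
  simp [WithLp.ofLp_sum, Finset.sum_apply, Pi.single_apply]

section SingleCoordinates

variable {ι : Type*} [Fintype ι] [DecidableEq ι]
  (K : Submodule ℝ (EuclideanSpace ℝ ι)) [K.HasOrthogonalProjection]

open EuclideanSpace

theorem Submodule.starProjection_single_apply (i j : ι) :
    K.starProjection (single j (1 : ℝ)) i =
      ⟪K.starProjection (single i (1 : ℝ)), K.starProjection (single j (1 : ℝ))⟫ := by
  rw [K.inner_starProjection_left_eq_right,
    K.starProjection_eq_self_iff.2 (K.starProjection_apply_mem _), inner_single_left, map_one,
    one_mul]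

theorem Submodule.starProjection_single_apply_eq_zero {i j : ι} (hij : i ≠ j)
    (h : single i (1 : ℝ) ∈ K ∨ single j (1 : ℝ) ∈ K) :
    K.starProjection (single j (1 : ℝ)) i = 0 := by
  have hij' : ⟪single i (1 : ℝ), single j (1 : ℝ)⟫ = 0 := by
    simp [inner_single_left, hij]
  rcases h with hi | hj
  · rw [← hij', ← K.starProjection_eq_self_iff.2 hi, K.inner_starProjection_left_eq_right,
      inner_single_left, map_one, one_mul]
  · rw [← K.starProjection_eq_self_iff.2 hj] at hij'
    rw [← hij', inner_single_left, map_one, one_mul]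

theorem Submodule.starProjection_sum_smul_single_sub_apply {b : EuclideanSpace ℝ ι} {s : Finset ι}
    (hb : ∀ i ∉ s, b i = 0) (c : ι → ℝ) (i : ι) :
    (K.starProjection (∑ j ∈ s, (b j - c j) • single j (1 : ℝ)) - K.starProjection b) i =
      -∑ j ∈ s, c j * K.starProjection (single j (1 : ℝ)) i := by
  have hdiff : ∑ j ∈ s, (b j - c j) • single j (1 : ℝ) - b = ∑ j ∈ s, (-c j) • single j 1 := by
    ext k
    simp only [PiLp.sub_apply, sum_smul_single_apply]
    by_cases hk : k ∈ s <;> simp [hk, hb]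
  rw [← map_sub, hdiff, map_sum]
  simp [WithLp.ofLp_sum, Finset.sum_apply]

end SingleCoordinates

section KernelProjection

variable {m n : ℕ} (A : EuclideanSpace ℝ (Fin n) →ₗ[ℝ] EuclideanSpace ℝ (Fin m))

theorem map_proj (x : EuclideanSpace ℝ (Fin n)) : A (proj A x) = A x := by
  have hx : x - proj A x ∈ LinearMap.ker A := by
    have hx := (LinearMap.ker A)ᗮ.sub_starProjection_mem_orthogonal x
    rwa [Submodule.orthogonal_orthogonal] at hx
  rwa [LinearMap.mem_ker, map_sub, sub_eq_zero, eq_comm] at hx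

theorem proj_stdBasis_ne_zero {i : Fin n} (hi : stdBasis n i ∉ LinearMap.ker A) :
    proj A (stdBasis n i) ≠ 0 :=
  fun h => hi (by rw [LinearMap.mem_ker, ← map_proj, h, map_zero])

theorem wgt_pos {i : Fin n} (hi : stdBasis n i ∉ LinearMap.ker A) : 0 < wgt A i :=
  norm_pos_iff.2 (proj_stdBasis_ne_zero A hi)

theorem proj_stdBasis_apply_self (i : Fin n) : proj A (stdBasis n i) i = wgt A i ^ 2 := by
  rw [wgt, ← real_inner_self_eq_norm_sq]
  exact (LinearMap.ker A)ᗮ.starProjection_single_apply i i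

theorem abs_proj_stdBasis_apply_lt (hA : ∀ i, stdBasis n i ∉ LinearMap.ker A)
    (hNP : ∀ i j : Fin n, i ≠ j → ∀ η : ℝ, A (stdBasis n i) ≠ η • A (stdBasis n j))
    {i j : Fin n} (hij : i ≠ j) : |proj A (stdBasis n j) i| < wgt A i * wgt A j := by
  have hinner := (LinearMap.ker A)ᗮ.starProjection_single_apply i j
  change proj A (stdBasis n j) i = ⟪proj A (stdBasis n i), proj A (stdBasis n j)⟫ at hinner
  rw [hinner]
  refine (abs_real_inner_le_norm _ _).lt_of_ne fun heq => ?_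
  obtain ⟨r, -, hr⟩ := (norm_inner_eq_norm_iff (proj_stdBasis_ne_zero A (hA i))
    (proj_stdBasis_ne_zero A (hA j))).1 ((Real.norm_eq_abs _).trans heq)
  exact hNP j i hij.symm r (by rw [← map_proj, hr, map_smul, map_proj])

end KernelProjection

section Certificate

variable {m n : ℕ} (A : EuclideanSpace ℝ (Fin n) →ₗ[ℝ] EuclideanSpace ℝ (Fin m))
  {x : EuclideanSpace ℝ (Fin n)} {jt : Fin n}

theorem sum_sign_div_wgt_mul_proj_apply_of_ne_zero (hA : ∀ i, stdBasis n i ∉ LinearMap.ker A)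
    (hJperp : ∀ j : Fin n, x j ≠ 0 → j ≠ jt → stdBasis n j ∈ (LinearMap.ker A)ᗮ)
    {i : Fin n} (hi : x i ≠ 0) :
    ∑ j ∈ Finset.univ.filter (fun j => x j ≠ 0),
      Real.sign (x j) / wgt A j * ((wgt A i)⁻¹ * proj A (stdBasis n j) i) = Real.sign (x i) := by
  rw [Finset.sum_eq_single i]
  · have := (wgt_pos A (hA i)).ne'
    rw [proj_stdBasis_apply_self]
    field_simp
  · intro j hj hji
    have hzero : proj A (stdBasis n j) i = 0 := by
      refine (LinearMap.ker A)ᗮ.starProjection_single_apply_eq_zero (Ne.symm hji) ?_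
      by_cases hjjt : j = jt
      · exact Or.inl (hJperp i hi (hjjt ▸ Ne.symm hji))
      · exact Or.inr (hJperp j (Finset.mem_filter.1 hj).2 hjjt)
    rw [hzero, mul_zero, mul_zero]
  · exact fun hi' => absurd (Finset.mem_filter.2 ⟨Finset.mem_univ i, hi⟩) hi'

theorem sum_sign_div_wgt_mul_proj_apply_mem_Ioo (hA : ∀ i, stdBasis n i ∉ LinearMap.ker A)
    (hNP : ∀ i j : Fin n, i ≠ j → ∀ η : ℝ, A (stdBasis n i) ≠ η • A (stdBasis n j))
    (hJperp : ∀ j : Fin n, x j ≠ 0 → j ≠ jt → stdBasis n j ∈ (LinearMap.ker A)ᗮ)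
    {i : Fin n} (hi : x i = 0) :
    ∑ j ∈ Finset.univ.filter (fun j => x j ≠ 0),
      Real.sign (x j) / wgt A j * ((wgt A i)⁻¹ * proj A (stdBasis n j) i) ∈ Set.Ioo (-1 : ℝ) 1 := by
  rw [Finset.sum_eq_single jt]
  · rw [Set.mem_Ioo, ← abs_lt]
    by_cases hijt : i = jt
    · simp [← hijt, hi, Real.sign_zero]
    have hwi := wgt_pos A (hA i)
    have hwj := wgt_pos A (hA jt)
    calc |Real.sign (x jt) / wgt A jt * ((wgt A i)⁻¹ * proj A (stdBasis n jt) i)|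
        = |Real.sign (x jt)| * (|proj A (stdBasis n jt) i| / (wgt A i * wgt A jt)) := by
          rw [abs_mul, abs_mul, abs_div, abs_inv, abs_of_pos hwi, abs_of_pos hwj]
          ring
      _ ≤ |proj A (stdBasis n jt) i| / (wgt A i * wgt A jt) :=
          mul_le_of_le_one_left (by positivity) (Real.abs_sign_le_one_s10 _)
      _ < 1 := (div_lt_one (by positivity)).2 (abs_proj_stdBasis_apply_lt A hA hNP hijt)
  · intro j hj hjjt
    have hxj := (Finset.mem_filter.1 hj).2
    have hzero : proj A (stdBasis n j) i = 0 :=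
      (LinearMap.ker A)ᗮ.starProjection_single_apply_eq_zero (fun h => hxj (h ▸ hi))
        (Or.inr (hJperp j hxj hjjt))
    rw [hzero, mul_zero, mul_zero]
  · intro hjt
    have hxjt : x jt = 0 := by simpa using hjt
    simp [hxjt, Real.sign_zero]

end Certificate

theorem stmt10_general {m n : ℕ}
    (A : EuclideanSpace ℝ (Fin n) →ₗ[ℝ] EuclideanSpace ℝ (Fin m))
    (hA : ∀ i, stdBasis n i ∉ LinearMap.ker A)
    (hNP : ∀ i j : Fin n, i ≠ j → ∀ η : ℝ, A (stdBasis n i) ≠ η • A (stdBasis n j))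
    (xstar : EuclideanSpace ℝ (Fin n)) (jt : Fin n)
    (hJperp : ∀ j : Fin n, xstar j ≠ 0 → j ≠ jt → stdBasis n j ∈ (LinearMap.ker A)ᗮ) :
    ∃ a : Fin n → ℝ,
      (∀ i, xstar i ≠ 0 →
        (∑ j ∈ Finset.univ.filter (fun j => xstar j ≠ 0),
          a j * ((wgt A i)⁻¹ * proj A (stdBasis n j) i)) = Real.sign (xstar i)) ∧
      (∀ i, xstar i = 0 →
        (∑ j ∈ Finset.univ.filter (fun j => xstar j ≠ 0),
          a j * ((wgt A i)⁻¹ * proj A (stdBasis n j) i)) ∈ Set.Ioo (-1 : ℝ) 1) ∧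
      ∀ α : ℝ, 0 < α →
        (∀ j, xstar j ≠ 0 → Real.sign (xstar j - α * a j) = Real.sign (xstar j)) →
        ∀ x : EuclideanSpace ℝ (Fin n),
          (1 / 2) * ‖proj A (∑ j ∈ Finset.univ.filter (fun j => xstar j ≠ 0),
              (xstar j - α * a j) • stdBasis n j) - proj A xstar‖ ^ 2 +
            α * wl1 A (∑ j ∈ Finset.univ.filter (fun j => xstar j ≠ 0),
              (xstar j - α * a j) • stdBasis n j) ≤
          (1 / 2) * ‖proj A x - proj A xstar‖ ^ 2 + α * wl1 A x := by
  set J := Finset.univ.filter (fun j => xstar j ≠ 0)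
  set a : Fin n → ℝ := fun j => Real.sign (xstar j) / wgt A j
  set v : Fin n → ℝ := fun i => ∑ j ∈ J, a j * ((wgt A i)⁻¹ * proj A (stdBasis n j) i)
  have hon : ∀ i, xstar i ≠ 0 → v i = Real.sign (xstar i) := fun i hi =>
    sum_sign_div_wgt_mul_proj_apply_of_ne_zero A hA hJperp hi
  have hoff : ∀ i, xstar i = 0 → v i ∈ Set.Ioo (-1) 1 := fun i hi =>
    sum_sign_div_wgt_mul_proj_apply_mem_Ioo A hA hNP hJperp hi
  refine ⟨a, hon, hoff, fun α hα hsgn x => ?_⟩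
  set y := ∑ j ∈ J, (xstar j - α * a j) • stdBasis n j
  have hv : ∀ i, |v i| ≤ 1 := fun i => by
    by_cases hi : xstar i = 0
    · exact (abs_lt.2 (hoff i hi)).le
    · exact hon i hi ▸ Real.abs_sign_le_one_s10 _
  have hvy : ∀ i, v i * y i = |y i| := fun i => by
    have hyi := EuclideanSpace.sum_smul_single_apply J (fun j => xstar j - α * a j) i
    by_cases hi : xstar i = 0
    · simp [y, stdBasis, hyi, J, hi]
    · simp only [y, stdBasis, hyi, J, Finset.mem_filter, Finset.mem_univ, true_and, if_pos hi]
      rw [hon i hi, ← hsgn i hi, Real.sign_mul_self]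
  have hgrad : ∀ i, (proj A y - proj A xstar) i = -(α * (wgt A i * v i)) := fun i => by
    have hwi := (wgt_pos A (hA i)).ne'
    refine ((LinearMap.ker A)ᗮ.starProjection_sum_smul_single_sub_apply
      (fun k hk => by simpa [J] using hk) (fun j => α * a j) i).trans ?_
    simp only [v, Finset.mul_sum]
    congr 1
    refine Finset.sum_congr rfl fun j _ => ?_
    field_simp
    rfl
  exact (LinearMap.ker A)ᗮ.half_sq_norm_starProjection_sub_add_weighted_l1_le
    (fun i => (wgt_pos A (hA i)).le) hα.le hv hvy hgrad x

theorem stmt10 {m n : ℕ}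
    (A : EuclideanSpace ℝ (Fin n) →ₗ[ℝ] EuclideanSpace ℝ (Fin m))
    (hA : ∀ i, stdBasis n i ∉ LinearMap.ker A)
    (hNP : ∀ i j : Fin n, i ≠ j → ∀ η : ℝ, A (stdBasis n i) ≠ η • A (stdBasis n j))
    (xstar : EuclideanSpace ℝ (Fin n)) (jt : Fin n) (hjt : xstar jt ≠ 0)
    (hJperp : ∀ j : Fin n, xstar j ≠ 0 → j ≠ jt → stdBasis n j ∈ (LinearMap.ker A)ᗮ) :
    ∃ a : Fin n → ℝ,
      (∀ i, xstar i ≠ 0 →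
        (∑ j ∈ Finset.univ.filter (fun j => xstar j ≠ 0),
          a j * ((wgt A i)⁻¹ * proj A (stdBasis n j) i)) = Real.sign (xstar i)) ∧
      (∀ i, xstar i = 0 →
        (∑ j ∈ Finset.univ.filter (fun j => xstar j ≠ 0),
          a j * ((wgt A i)⁻¹ * proj A (stdBasis n j) i)) ∈ Set.Ioo (-1 : ℝ) 1) ∧
      ∀ α : ℝ, 0 < α →
        (∀ j, xstar j ≠ 0 → Real.sign (xstar j - α * a j) = Real.sign (xstar j)) →
        ∀ x : EuclideanSpace ℝ (Fin n),
          (1 / 2) * ‖proj A (∑ j ∈ Finset.univ.filter (fun j => xstar j ≠ 0),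
              (xstar j - α * a j) • stdBasis n j) - proj A xstar‖ ^ 2 +
            α * wl1 A (∑ j ∈ Finset.univ.filter (fun j => xstar j ≠ 0),
              (xstar j - α * a j) • stdBasis n j) ≤
          (1 / 2) * ‖proj A x - proj A xstar‖ ^ 2 + α * wl1 A x :=
  stmt10_general A hA hNP xstar jt hJperp
end

section
/- Let x* ∈ ℝⁿ with support J = supp(x*), and let b† = A x*. Suppose there exists a vector c ∈ ℝⁿ such that ⟨P e_i, c⟩ = ‖P e_i‖₂ · sgn(x*_i) for every i ∈ J and |⟨P e_i, c⟩| < ‖P e_i‖₂ for every i ∉ J, and suppose A is injective on the support of x* (the only q with supp(q) ⊆ supp(x*) and A q = 0 is q = 0). Then for every C > 0 there exists c₀ > 0 such that for every δ > 0, every b^δ ∈ ℝᵐ with ‖b^δ − b†‖₂ ≤ δ, and every minimizer x_α of the functional x ↦ ½ ‖A x − b^δ‖₂² + α Σ_{i=1}^n w_i |x_i| with α = C δ, one has ‖W (x_α − x*)‖₂ ≤ c₀ δ. -/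
open scoped RealInnerProductSpace Classical

/-!
Since `P` is self-adjoint, `η = P c` has coordinates `⟪P e_i, c⟫`, so the hypotheses on `c` say
that `η ∈ (ker A)ᗮ` is a subgradient of `‖W ·‖₁` at `x*`; in finite dimension this gives
`|⟪η, z⟫| ≤ L ‖A z‖`. Comparing the Tikhonov functional at `x_α` and at `x*` then bounds both
`‖A z‖`, for `z = x_α - x*`, and the Bregman distance `D` of `x_α` from `x*` by multiples of `δ`.
Off the support `D ≥ (w i - |η i|) |z i|` with positive gaps `w i - |η i|`. Injectivity of `A` on
the support gives `‖z‖ ≲ ‖A z‖ + max_{i ∉ J} (w i - |η i|) |z i|`, and `w i ≤ 1` gives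
`‖W z‖₂ ≤ ‖z‖`.
-/

theorem exists_norm_le_mul_add_norm_of_ker_inf_ker_eq_bot {𝕜 E F G : Type*}
    [NontriviallyNormedField 𝕜] [CompleteSpace 𝕜]
    [NormedAddCommGroup E] [NormedSpace 𝕜 E] [FiniteDimensional 𝕜 E]
    [NormedAddCommGroup F] [NormedSpace 𝕜 F] [NormedAddCommGroup G] [NormedSpace 𝕜 G]
    (f : E →ₗ[𝕜] F) (g : E →ₗ[𝕜] G) (h : LinearMap.ker f ⊓ LinearMap.ker g = ⊥) :
    ∃ K > 0, ∀ x, ‖x‖ ≤ K * (‖f x‖ + ‖g x‖) := by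
  obtain ⟨K, hK, hfg⟩ := (f.prod g).exists_antilipschitzWith (by rwa [LinearMap.ker_prod])
  refine ⟨K, hK, fun x => (hfg.le_mul_norm (map_zero _) x).trans ?_⟩
  gcongr
  exact max_le_add_of_nonneg (norm_nonneg _) (norm_nonneg _)

theorem exists_abs_inner_le_mul_norm_of_mem_orthogonal_ker {E F : Type*}
    [NormedAddCommGroup E] [InnerProductSpace ℝ E] [FiniteDimensional ℝ E]
    [NormedAddCommGroup F] [NormedSpace ℝ F] (A : E →ₗ[ℝ] F) {η : E}
    (hη : η ∈ (LinearMap.ker A)ᗮ) : ∃ L ≥ 0, ∀ z, |⟪η, z⟫| ≤ L * ‖A z‖ := by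
  set P := (LinearMap.ker A).starProjection
  obtain ⟨K, hK, hnorm⟩ := exists_norm_le_mul_add_norm_of_ker_inf_ker_eq_bot A P.toLinearMap
    (by rw [Submodule.ker_starProjection]; exact Submodule.inf_orthogonal_eq_bot _)
  refine ⟨‖η‖ * K, by positivity, fun z => ?_⟩
  have hPz : P z ∈ LinearMap.ker A := (LinearMap.ker A).starProjection_apply_mem z
  have hinner : ⟪η, z⟫ = ⟪η, z - P z⟫ := by
    rw [inner_sub_right, Submodule.inner_left_of_mem_orthogonal hPz hη, sub_zero]
  have hAz : A (z - P z) = A z := by rw [map_sub, LinearMap.mem_ker.mp hPz, sub_zero]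
  have hPPz : P (z - P z) = 0 := by
    rw [map_sub, Submodule.starProjection_eq_self_iff.mpr hPz, sub_self]
  calc |⟪η, z⟫| ≤ ‖η‖ * ‖z - P z‖ := hinner ▸ abs_real_inner_le_norm _ _
    _ ≤ ‖η‖ * (K * ‖A z‖) := by
      gcongr
      simpa [hAz, hPPz] using hnorm (z - P z)
    _ = ‖η‖ * K * ‖A z‖ := by ring

section Bregman

variable {E : Type*} [NormedAddCommGroup E] [InnerProductSpace ℝ E]

noncomputable def bregmanDist (R : E → ℝ) (η x₀ x : E) : ℝ := R x - R x₀ - ⟪η, x - x₀⟫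

theorem norm_map_sub_le_and_bregmanDist_le_of_tikhonov {F : Type*} [SeminormedAddCommGroup F]
    [Module ℝ F] (A : E →ₗ[ℝ] F) (R : E → ℝ) {η x₀ x : E} {b : F} {C δ L : ℝ}
    (hC : 0 < C) (hδ : 0 < δ) (hL : 0 ≤ L)
    (hη : |⟪η, x - x₀⟫| ≤ L * ‖A (x - x₀)‖) (hD : 0 ≤ bregmanDist R η x₀ x)
    (hb : ‖b - A x₀‖ ≤ δ)
    (hx : 1 / 2 * ‖A x - b‖ ^ 2 + C * δ * R x ≤ 1 / 2 * ‖A x₀ - b‖ ^ 2 + C * δ * R x₀) :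
    ‖A (x - x₀)‖ ≤ 2 * (1 + C * L) * δ ∧
      bregmanDist R η x₀ x ≤ (1 / (2 * C) + 2 * L * (1 + C * L)) * δ := by
  set r := ‖A x - b‖
  have hCδ : 0 < C * δ := mul_pos hC hδ
  have hAz : ‖A (x - x₀)‖ ≤ r + δ := by
    rw [map_sub, ← sub_add_sub_cancel (A x) b (A x₀)]
    exact norm_add_le_of_le le_rfl hb
  have hb' : ‖A x₀ - b‖ ^ 2 ≤ δ ^ 2 := by
    rw [norm_sub_rev]; exact pow_le_pow_left₀ (norm_nonneg _) hb 2
  have hη' : -⟪η, x - x₀⟫ ≤ L * (r + δ) :=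
    (neg_le_abs _).trans (hη.trans (mul_le_mul_of_nonneg_left hAz hL))
  have key : 1 / 2 * r ^ 2 + C * δ * bregmanDist R η x₀ x ≤
      1 / 2 * δ ^ 2 + C * δ * (L * (r + δ)) := by
    have := mul_le_mul_of_nonneg_left hη' hCδ.le
    unfold bregmanDist
    nlinarith
  -- `key` and `0 ≤ D` give `(r - (1 + 2 C L) δ) (r + δ) ≤ 0`.
  have hr : r ≤ (1 + 2 * C * L) * δ := by
    nlinarith [mul_nonneg hCδ.le hD, norm_nonneg (A x - b)]
  refine ⟨by linarith, le_of_mul_le_mul_left ?_ hCδ⟩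
  calc C * δ * bregmanDist R η x₀ x ≤ 1 / 2 * δ ^ 2 + C * δ * (L * (r + δ)) := by
        nlinarith [sq_nonneg r]
    _ ≤ 1 / 2 * δ ^ 2 + C * δ * (L * (2 * (1 + C * L) * δ)) := by gcongr; linarith
    _ = C * δ * ((1 / (2 * C) + 2 * L * (1 + C * L)) * δ) := by field_simp

end Bregman

theorem Real.sign_mul_sub_le_abs_sub_abs (a t : ℝ) : Real.sign a * (t - a) ≤ |t| - |a| := by
  rcases lt_trichotomy a 0 with ha | rfl | ha
  · rw [Real.sign_of_neg ha, abs_of_neg ha]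
    linarith [neg_abs_le t]
  · simp
  · rw [Real.sign_of_pos ha, abs_of_pos ha]
    linarith [le_abs_self t]

section WeightedL1

variable {ι : Type*} {w : ι → ℝ} {η x₀ : EuclideanSpace ℝ ι}

theorem bregmanDist_weightedL1_term_nonneg (hw : ∀ i, 0 ≤ w i)
    (hη_on : ∀ i, x₀ i ≠ 0 → η i = w i * Real.sign (x₀ i))
    (hη_off : ∀ i, x₀ i = 0 → |η i| ≤ w i) (x : EuclideanSpace ℝ ι) (i : ι) :
    0 ≤ w i * |x i| - w i * |x₀ i| - η i * (x i - x₀ i) := by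
  by_cases hi : x₀ i = 0
  · rw [hi, abs_zero, mul_zero, sub_zero, sub_zero]
    nlinarith [le_abs_self (η i * x i), abs_mul (η i) (x i), hη_off i hi, abs_nonneg (x i)]
  · rw [hη_on i hi]
    nlinarith [Real.sign_mul_sub_le_abs_sub_abs (x₀ i) (x i), hw i]

variable [Fintype ι]

def weightedL1 (w : ι → ℝ) (x : EuclideanSpace ℝ ι) : ℝ := ∑ i, w i * |x i|

theorem bregmanDist_weightedL1 (η x₀ x : EuclideanSpace ℝ ι) :
    bregmanDist (weightedL1 w) η x₀ x =
      ∑ i, (w i * |x i| - w i * |x₀ i| - η i * (x i - x₀ i)) := by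
  simp [bregmanDist, weightedL1, PiLp.inner_apply, Finset.sum_sub_distrib, mul_comm]

theorem bregmanDist_weightedL1_nonneg (hw : ∀ i, 0 ≤ w i)
    (hη_on : ∀ i, x₀ i ≠ 0 → η i = w i * Real.sign (x₀ i))
    (hη_off : ∀ i, x₀ i = 0 → |η i| ≤ w i) (x : EuclideanSpace ℝ ι) :
    0 ≤ bregmanDist (weightedL1 w) η x₀ x := by
  rw [bregmanDist_weightedL1]
  exact Finset.sum_nonneg fun i _ => bregmanDist_weightedL1_term_nonneg hw hη_on hη_off x i

theorem sub_abs_mul_abs_sub_le_bregmanDist_weightedL1 (hw : ∀ i, 0 ≤ w i)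
    (hη_on : ∀ i, x₀ i ≠ 0 → η i = w i * Real.sign (x₀ i))
    (hη_off : ∀ i, x₀ i = 0 → |η i| ≤ w i) (x : EuclideanSpace ℝ ι) {i : ι} (hi : x₀ i = 0) :
    (w i - |η i|) * |x i - x₀ i| ≤ bregmanDist (weightedL1 w) η x₀ x := by
  calc (w i - |η i|) * |x i - x₀ i| ≤ w i * |x i| - w i * |x₀ i| - η i * (x i - x₀ i) := by
        rw [hi, abs_zero, mul_zero, sub_zero, sub_zero]
        nlinarith [le_abs_self (η i * x i), abs_mul (η i) (x i)]
    _ ≤ bregmanDist (weightedL1 w) η x₀ x := by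
        rw [bregmanDist_weightedL1]
        exact Finset.single_le_sum
          (fun j _ => bregmanDist_weightedL1_term_nonneg hw hη_on hη_off x j) (Finset.mem_univ i)

end WeightedL1

theorem sqrt_sum_sq_mul_le_norm {ι : Type*} [Fintype ι] {w : ι → ℝ} (hw : ∀ i, |w i| ≤ 1)
    (z : EuclideanSpace ℝ ι) : √(∑ i, (w i * z i) ^ 2) ≤ ‖z‖ := by
  rw [EuclideanSpace.norm_eq]
  refine Real.sqrt_le_sqrt (Finset.sum_le_sum fun i _ => ?_)
  rw [Real.norm_eq_abs, sq_abs, mul_pow]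
  exact mul_le_of_le_one_left (sq_nonneg _) ((sq_le_one_iff_abs_le_one _).mpr (hw i))

section Projection

variable {m n : ℕ} (A : EuclideanSpace ℝ (Fin n) →ₗ[ℝ] EuclideanSpace ℝ (Fin m))

theorem proj_mem_orthogonal_ker (x : EuclideanSpace ℝ (Fin n)) :
    proj A x ∈ (LinearMap.ker A)ᗮ :=
  Submodule.coe_mem _

theorem proj_apply (x : EuclideanSpace ℝ (Fin n)) (i : Fin n) :
    proj A x i = ⟪proj A (stdBasis n i), x⟫ := by
  have : ⟪proj A (stdBasis n i), x⟫ = ⟪stdBasis n i, proj A x⟫ :=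
    Submodule.inner_starProjection_left_eq_right _ _ _
  rw [this, stdBasis, EuclideanSpace.inner_single_left, map_one, one_mul]

theorem wgt_nonneg (i : Fin n) : 0 ≤ wgt A i := norm_nonneg _

theorem abs_wgt_le_one (i : Fin n) : |wgt A i| ≤ 1 := by
  rw [abs_of_nonneg (wgt_nonneg A i)]
  refine (Submodule.norm_orthogonalProjectionOnto_apply_le (LinearMap.ker A)ᗮ
    (stdBasis n i)).trans_eq ?_
  simp [stdBasis]

end Projection

theorem stmt11_general {m n : ℕ}
    (A : EuclideanSpace ℝ (Fin n) →ₗ[ℝ] EuclideanSpace ℝ (Fin m))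
    (xstar c : EuclideanSpace ℝ (Fin n))
    (hc1 : ∀ i, xstar i ≠ 0 →
      ⟪proj A (stdBasis n i), c⟫ = ‖proj A (stdBasis n i)‖ * Real.sign (xstar i))
    (hc2 : ∀ i, xstar i = 0 →
      |⟪proj A (stdBasis n i), c⟫| < ‖proj A (stdBasis n i)‖)
    (hinj : ∀ q : EuclideanSpace ℝ (Fin n), (∀ i, q i ≠ 0 → xstar i ≠ 0) → A q = 0 → q = 0) :
    ∀ C : ℝ, 0 < C → ∃ c₀ : ℝ, 0 < c₀ ∧
      ∀ δ : ℝ, 0 < δ → ∀ bδ : EuclideanSpace ℝ (Fin m), ‖bδ - A xstar‖ ≤ δ →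
        ∀ xα : EuclideanSpace ℝ (Fin n),
          (∀ x : EuclideanSpace ℝ (Fin n),
            (1 / 2) * ‖A xα - bδ‖ ^ 2 + (C * δ) * wl1 A xα ≤
              (1 / 2) * ‖A x - bδ‖ ^ 2 + (C * δ) * wl1 A x) →
          Real.sqrt (∑ i, (wgt A i * (xα i - xstar i)) ^ 2) ≤ c₀ * δ := by
  intro C hC
  set η := proj A c
  have hη_on : ∀ i, xstar i ≠ 0 → η i = wgt A i * Real.sign (xstar i) := fun i hi =>
    (proj_apply A c i).trans (hc1 i hi)
  have hη_off : ∀ i, xstar i = 0 → |η i| < wgt A i := fun i hi =>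
    (proj_apply A c i).symm ▸ hc2 i hi
  obtain ⟨L, hL, hηA⟩ := exists_abs_inner_le_mul_norm_of_mem_orthogonal_ker A
    (proj_mem_orthogonal_ker A c)
  -- Weighting the off-support coordinates by the gaps `w i - |η i| > 0` makes `‖g z‖ ≤ D`.
  let g : EuclideanSpace ℝ (Fin n) →ₗ[ℝ] ({i // xstar i = 0} → ℝ) :=
    LinearMap.pi fun i => (wgt A i - |η i|) • EuclideanSpace.projₗ (i : Fin n)
  obtain ⟨K, hK, hnorm⟩ := exists_norm_le_mul_add_norm_of_ker_inf_ker_eq_bot A g <| by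
    refine (Submodule.eq_bot_iff _).mpr fun q ⟨hAq, hgq⟩ => hinj q (fun i hqi hi => hqi ?_) hAq
    have := congr_fun (LinearMap.mem_ker.mp hgq) ⟨i, hi⟩
    simpa [g, (sub_pos.mpr (hη_off i hi)).ne'] using this
  refine ⟨K * (2 * (1 + C * L) + (1 / (2 * C) + 2 * L * (1 + C * L))), by positivity, ?_⟩
  intro δ hδ bδ hbδ xα hmin
  have hw := wgt_nonneg A
  have hη_off_le := fun i hi => (hη_off i hi).le
  obtain ⟨hAz, hD⟩ := norm_map_sub_le_and_bregmanDist_le_of_tikhonov A (weightedL1 (wgt A)) hC hδ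
    hL (hηA _) (bregmanDist_weightedL1_nonneg hw hη_on hη_off_le xα) hbδ (hmin xstar)
  have hgz : ‖g (xα - xstar)‖ ≤ (1 / (2 * C) + 2 * L * (1 + C * L)) * δ := by
    refine (pi_norm_le_iff_of_nonneg (by positivity)).mpr fun ⟨i, hi⟩ => le_trans ?_ hD
    simpa [g, abs_of_pos (sub_pos.mpr (hη_off i hi))] using
      sub_abs_mul_abs_sub_le_bregmanDist_weightedL1 hw hη_on hη_off_le xα hi
  calc Real.sqrt (∑ i, (wgt A i * (xα i - xstar i)) ^ 2) ≤ ‖xα - xstar‖ :=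
        sqrt_sum_sq_mul_le_norm (abs_wgt_le_one A) (xα - xstar)
    _ ≤ K * (‖A (xα - xstar)‖ + ‖g (xα - xstar)‖) := hnorm _
    _ ≤ K * (2 * (1 + C * L) * δ + (1 / (2 * C) + 2 * L * (1 + C * L)) * δ) := by gcongr
    _ = _ := by ring

theorem stmt11 {m n : ℕ}
    (A : EuclideanSpace ℝ (Fin n) →ₗ[ℝ] EuclideanSpace ℝ (Fin m))
    (hA : ∀ i, stdBasis n i ∉ LinearMap.ker A)
    (xstar c : EuclideanSpace ℝ (Fin n))
    (hc1 : ∀ i, xstar i ≠ 0 →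
      ⟪proj A (stdBasis n i), c⟫ = ‖proj A (stdBasis n i)‖ * Real.sign (xstar i))
    (hc2 : ∀ i, xstar i = 0 →
      |⟪proj A (stdBasis n i), c⟫| < ‖proj A (stdBasis n i)‖)
    (hinj : ∀ q : EuclideanSpace ℝ (Fin n), (∀ i, q i ≠ 0 → xstar i ≠ 0) → A q = 0 → q = 0) :
    ∀ C : ℝ, 0 < C → ∃ c₀ : ℝ, 0 < c₀ ∧
      ∀ δ : ℝ, 0 < δ → ∀ bδ : EuclideanSpace ℝ (Fin m), ‖bδ - A xstar‖ ≤ δ →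
        ∀ xα : EuclideanSpace ℝ (Fin n),
          (∀ x : EuclideanSpace ℝ (Fin n),
            (1 / 2) * ‖A xα - bδ‖ ^ 2 + (C * δ) * wl1 A xα ≤
              (1 / 2) * ‖A x - bδ‖ ^ 2 + (C * δ) * wl1 A x) →
          Real.sqrt (∑ i, (wgt A i * (xα i - xstar i)) ^ 2) ≤ c₀ * δ :=
  stmt11_general A xstar c hc1 hc2 hinj
end
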